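/- arXiv:2604.00664 — 5 statements merged into one kernel-verified Lean document; each statement's English description precedes it below -/
import Mathlib

section
/- Cycle constraint implies zero angle sum: let n ≥ 1, let θ_1, …, θ_n be real numbers (the angle differences along a cycle with buses k_1, …, k_n, indices taken cyclically so that k_{n+1} = k_1), and let V_1, …, V_n be nonzero real numbers (the voltage magnitudes). Define c_i := V_i · V_{i+1} · cos θ_i, s_i := V_i · V_{i+1} · sin θ_i for i = 1, …, n (cyclically), and d_i := V_i². If ∑_{A ⊆ {1,…,n}, |A| even} (−1)^{|A|/2} · ∏_{h∈A} s_h · ∏_{h∉A} c_h = ∏_{i=1}^n d_i, then ∑_{i=1}^n θ_i ≡ 0 (mod 2π), i.e., there exists an integer m with ∑_{i=1}^n θ_i = 2πm. -/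
/-!
The left-hand side of the cycle constraint is the real part of `∏ i, (s i * I + c i)`, expanded
over the subsets `A` of factors contributing `s i * I` (only `|A|` even gives a real `I ^ |A|`).
In polar form each factor is `V i * V (i + 1) * exp (θ i * I)`, so the product is
`(∏ i, V i ^ 2) * exp ((∑ i, θ i) * I)`, the cyclic shift making each `V i` appear twice.
The constraint therefore reads `P * cos (∑ i, θ i) = P` with `P ≠ 0`, i.e. `cos (∑ i, θ i) = 1`.
-/

open Finset

namespace Complex

lemma re_I_pow (k : ℕ) : (I ^ k).re = if Even k then (-1 : ℝ) ^ (k / 2) else 0 := by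
  have hI2 : ∀ m : ℕ, I ^ (2 * m) = ((-1 : ℝ) ^ m : ℝ) := fun m => by
    rw [pow_mul, I_sq]; push_cast; rfl
  obtain ⟨m, rfl | rfl⟩ := Nat.even_or_odd' k
  · rw [hI2, ofReal_re, if_pos (even_two_mul m), Nat.mul_div_cancel_left m two_pos]
  · rw [pow_succ, hI2, re_ofReal_mul, I_re, mul_zero, if_neg (Nat.not_even_two_mul_add_one m)]

lemma re_prod_mul_I_add {ι : Type*} [DecidableEq ι] (t : Finset ι) (s c : ι → ℝ) :
    (∏ i ∈ t, ((s i : ℂ) * I + c i)).re =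
      ∑ A ∈ t.powerset.filter (fun A => Even A.card),
        (-1 : ℝ) ^ (A.card / 2) * (∏ h ∈ A, s h) * ∏ h ∈ t \ A, c h := by
  rw [prod_add, re_sum, sum_filter]
  refine sum_congr rfl fun A _ => ?_
  have hterm : (∏ h ∈ A, (s h : ℂ) * I) * ∏ h ∈ t \ A, (c h : ℂ) =
      (((∏ h ∈ A, s h) * ∏ h ∈ t \ A, c h : ℝ) : ℂ) * I ^ A.card := by
    rw [prod_mul_distrib, prod_const]
    push_cast
    ring
  rw [hterm, re_ofReal_mul, re_I_pow]
  split_ifs <;> ring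

lemma re_prod_polar {ι : Type*} (t : Finset ι) (r θ : ι → ℝ) :
    (∏ i ∈ t, (((r i * Real.sin (θ i) : ℝ) : ℂ) * I + (r i * Real.cos (θ i) : ℝ))).re =
      (∏ i ∈ t, r i) * Real.cos (∑ i ∈ t, θ i) := by
  have hpolar : ∀ i, (((r i * Real.sin (θ i) : ℝ) : ℂ) * I + (r i * Real.cos (θ i) : ℝ)) =
      r i * exp (θ i * I) := by
    intro i
    rw [exp_mul_I, ← ofReal_cos, ← ofReal_sin]
    push_cast
    ring
  simp_rw [hpolar, prod_mul_distrib, ← exp_sum, ← sum_mul, ← ofReal_prod, ← ofReal_sum,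
    re_ofReal_mul, exp_ofReal_mul_I_re]

end Complex

lemma Fintype.prod_mul_comp_add_right {G M : Type*} [AddGroup G] [Fintype G] [CommMonoid M]
    (f : G → M) (a : G) : ∏ i, f i * f (i + a) = ∏ i, f i ^ 2 := by
  rw [prod_mul_distrib, Fintype.prod_equiv (Equiv.addRight a) (fun i => f (i + a)) f
    fun _ => rfl, prod_pow, sq]

theorem cycle_constraint_imp_angle_sum_zero_general (n : ℕ) [NeZero n]
    (θ V c s d : Fin n → ℝ) (hV : ∀ i, V i ≠ 0)
    (hc : ∀ i, c i = V i * V (i + 1) * Real.cos (θ i))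
    (hs : ∀ i, s i = V i * V (i + 1) * Real.sin (θ i))
    (hd : ∀ i, d i = (V i) ^ 2)
    (hcycle : ∑ A ∈ (Finset.univ : Finset (Fin n)).powerset.filter (fun A => Even A.card),
        (-1 : ℝ) ^ (A.card / 2) * (∏ h ∈ A, s h) * ∏ h ∈ Finset.univ \ A, c h =
        ∏ i, d i) :
    ∃ m : ℤ, ∑ i, θ i = 2 * Real.pi * m := by
  have hprod_d : ∏ i, d i = ∏ i, V i * V (i + 1) := by
    simp only [hd, Fintype.prod_mul_comp_add_right]
  have hprod_ne : ∏ i, d i ≠ 0 := prod_ne_zero_iff.2 fun i _ => hd i ▸ pow_ne_zero 2 (hV i)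
  rw [← Complex.re_prod_mul_I_add] at hcycle
  simp only [hc, hs, Complex.re_prod_polar, ← hprod_d] at hcycle
  obtain ⟨m, hm⟩ := (Real.cos_eq_one_iff _).1 ((mul_eq_left₀ hprod_ne).1 hcycle)
  exact ⟨m, by rw [← hm]; ring⟩

/-- Cycle constraint implies zero angle sum: if the voltages `V i` are nonzero,
`c i = V i * V (i+1) * cos (θ i)`, `s i = V i * V (i+1) * sin (θ i)` (indices cyclic),
`d i = (V i)^2`, and the cycle constraint
`∑_{A even} (−1)^(|A|/2) ∏_{h∈A} s h ∏_{h∉A} c h = ∏ i, d i` holds, then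
`∑ i, θ i ≡ 0 (mod 2π)`. -/
theorem cycle_constraint_imp_angle_sum_zero (n : ℕ) [NeZero n] (hn : 1 ≤ n)
    (θ V c s d : Fin n → ℝ) (hV : ∀ i, V i ≠ 0)
    (hc : ∀ i, c i = V i * V (i + 1) * Real.cos (θ i))
    (hs : ∀ i, s i = V i * V (i + 1) * Real.sin (θ i))
    (hd : ∀ i, d i = (V i) ^ 2)
    (hcycle : ∑ A ∈ (Finset.univ : Finset (Fin n)).powerset.filter (fun A => Even A.card),
        (-1 : ℝ) ^ (A.card / 2) * (∏ h ∈ A, s h) * ∏ h ∈ Finset.univ \ A, c h =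
        ∏ i, d i) :
    ∃ m : ℤ, ∑ i, θ i = 2 * Real.pi * m :=
  cycle_constraint_imp_angle_sum_zero_general n θ V c s d hV hc hs hd hcycle
end

section
/- 3-cycle constraint characterization: let θ_{12}, θ_{23}, θ_{31} be real numbers and V_1, V_2, V_3 nonzero real numbers. Define c_{ij} := V_i V_j cos θ_{ij}, s_{ij} := V_i V_j sin θ_{ij} for (i,j) ∈ {(1,2),(2,3),(3,1)}, and c_{ii} := V_i². Then the quantity p_3 := c_{12}(c_{23}c_{31} − s_{23}s_{31}) − s_{12}(s_{23}c_{31} + c_{23}s_{31}) − c_{11}c_{22}c_{33} satisfies p_3 = V_1² V_2² V_3² (cos(θ_{12} + θ_{23} + θ_{31}) − 1); consequently p_3 = 0 if and only if θ_{12} + θ_{23} + θ_{31} ≡ 0 (mod 2π). -/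
/-- 3-cycle constraint characterization: with `c_{ij} = V_i V_j cos θ_{ij}`,
`s_{ij} = V_i V_j sin θ_{ij}` and `c_{ii} = V_i²`, the quantity
`p₃ = c₁₂(c₂₃c₃₁ − s₂₃s₃₁) − s₁₂(s₂₃c₃₁ + c₂₃s₃₁) − c₁₁c₂₂c₃₃` equals
`V₁²V₂²V₃²(cos(θ₁₂+θ₂₃+θ₃₁) − 1)`; consequently `p₃ = 0` iff
`θ₁₂+θ₂₃+θ₃₁ ≡ 0 (mod 2π)`. -/
theorem three_cycle_constraint_characterization
    (θ12 θ23 θ31 V1 V2 V3 : ℝ) (hV1 : V1 ≠ 0) (hV2 : V2 ≠ 0) (hV3 : V3 ≠ 0)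
    (c12 s12 c23 s23 c31 s31 c11 c22 c33 p3 : ℝ)
    (hc12 : c12 = V1 * V2 * Real.cos θ12) (hs12 : s12 = V1 * V2 * Real.sin θ12)
    (hc23 : c23 = V2 * V3 * Real.cos θ23) (hs23 : s23 = V2 * V3 * Real.sin θ23)
    (hc31 : c31 = V3 * V1 * Real.cos θ31) (hs31 : s31 = V3 * V1 * Real.sin θ31)
    (hc11 : c11 = V1 ^ 2) (hc22 : c22 = V2 ^ 2) (hc33 : c33 = V3 ^ 2)
    (hp3 : p3 = c12 * (c23 * c31 - s23 * s31) - s12 * (s23 * c31 + c23 * s31)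
        - c11 * c22 * c33) :
    p3 = V1 ^ 2 * V2 ^ 2 * V3 ^ 2 * (Real.cos (θ12 + θ23 + θ31) - 1) ∧
      (p3 = 0 ↔ ∃ m : ℤ, θ12 + θ23 + θ31 = 2 * Real.pi * m) := by
  have key : p3 = V1 ^ 2 * V2 ^ 2 * V3 ^ 2 * (Real.cos (θ12 + θ23 + θ31) - 1) := by
    subst hp3 hc12 hs12 hc23 hs23 hc31 hs31 hc11 hc22 hc33
    rw [Real.cos_add, Real.cos_add, Real.sin_add]
    ring
  refine ⟨key, ?_⟩
  have hV : V1 ^ 2 * V2 ^ 2 * V3 ^ 2 ≠ 0 := by positivity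
  rw [key, mul_eq_zero, or_iff_right hV, sub_eq_zero, Real.cos_eq_one_iff]
  constructor
  · rintro ⟨n, hn⟩; exact ⟨n, by linarith [hn]⟩
  · rintro ⟨m, hm⟩; exact ⟨m, by linarith [hm]⟩
end

section
/- Split 4-cycle system equivalence: let θ_{12}, θ_{23}, θ_{34}, θ_{41} be real numbers and V_1, V_2, V_3, V_4 nonzero real numbers. Define c_{ij} := V_i V_j cos θ_{ij} and s_{ij} := V_i V_j sin θ_{ij} for (i,j) ∈ {(1,2),(2,3),(3,4),(4,1)}. Then the system q_1 := s_{12}c_{34} + c_{12}s_{34} + s_{23}c_{41} + c_{23}s_{41} = 0 and q_2 := c_{12}c_{34} − s_{12}s_{34} − c_{23}c_{41} + s_{23}s_{41} = 0 holds if and only if θ_{12} + θ_{23} + θ_{34} + θ_{41} ≡ 0 (mod 2π). -/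
/-- Split 4-cycle system equivalence: with `c_{ij} = V_i V_j cos θ_{ij}` and
`s_{ij} = V_i V_j sin θ_{ij}`, the system
`s₁₂c₃₄ + c₁₂s₃₄ + s₂₃c₄₁ + c₂₃s₄₁ = 0` and
`c₁₂c₃₄ − s₁₂s₃₄ − c₂₃c₄₁ + s₂₃s₄₁ = 0` holds iff
`θ₁₂+θ₂₃+θ₃₄+θ₄₁ ≡ 0 (mod 2π)`. -/
theorem split_four_cycle_system_equivalence
    (θ12 θ23 θ34 θ41 V1 V2 V3 V4 : ℝ)
    (hV1 : V1 ≠ 0) (hV2 : V2 ≠ 0) (hV3 : V3 ≠ 0) (hV4 : V4 ≠ 0)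
    (c12 s12 c23 s23 c34 s34 c41 s41 : ℝ)
    (hc12 : c12 = V1 * V2 * Real.cos θ12) (hs12 : s12 = V1 * V2 * Real.sin θ12)
    (hc23 : c23 = V2 * V3 * Real.cos θ23) (hs23 : s23 = V2 * V3 * Real.sin θ23)
    (hc34 : c34 = V3 * V4 * Real.cos θ34) (hs34 : s34 = V3 * V4 * Real.sin θ34)
    (hc41 : c41 = V4 * V1 * Real.cos θ41) (hs41 : s41 = V4 * V1 * Real.sin θ41) :
    (s12 * c34 + c12 * s34 + s23 * c41 + c23 * s41 = 0 ∧
      c12 * c34 - s12 * s34 - c23 * c41 + s23 * s41 = 0) ↔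
      ∃ m : ℤ, θ12 + θ23 + θ34 + θ41 = 2 * Real.pi * m := by
  subst hc12 hs12 hc23 hs23 hc34 hs34 hc41 hs41
  have hK : V1 * V2 * V3 * V4 ≠ 0 := by
    exact mul_ne_zero (mul_ne_zero (mul_ne_zero hV1 hV2) hV3) hV4
  constructor
  · rintro ⟨h1, h2⟩
    have h1' : (Real.sin (θ12 + θ34) + Real.sin (θ23 + θ41)) * (V1 * V2 * V3 * V4) = 0 := by
      rw [Real.sin_add, Real.sin_add]; linear_combination h1
    have h2' : (Real.cos (θ12 + θ34) - Real.cos (θ23 + θ41)) * (V1 * V2 * V3 * V4) = 0 := by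
      rw [Real.cos_add, Real.cos_add]; linear_combination h2
    have e1 : Real.sin (θ12 + θ34) = Real.sin (-(θ23 + θ41)) := by
      rw [Real.sin_neg]
      have := (mul_eq_zero.mp h1').resolve_right hK
      linarith
    have e2 : Real.cos (θ12 + θ34) = Real.cos (-(θ23 + θ41)) := by
      rw [Real.cos_neg]
      have := (mul_eq_zero.mp h2').resolve_right hK
      linarith
    have := Real.Angle.angle_eq_iff_two_pi_dvd_sub.mp (Real.Angle.cos_sin_inj e2 e1)
    obtain ⟨k, hk⟩ := this
    exact ⟨k, by linarith⟩
  · rintro ⟨m, hm⟩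
    have hrel : θ23 + θ41 = (m : ℝ) * (2 * Real.pi) - (θ12 + θ34) := by
      linarith
    have e1 : Real.sin (θ23 + θ41) = -Real.sin (θ12 + θ34) := by
      rw [hrel, Real.sin_int_mul_two_pi_sub]
    have e2 : Real.cos (θ23 + θ41) = Real.cos (θ12 + θ34) := by
      rw [hrel, Real.cos_int_mul_two_pi_sub]
    constructor
    · rw [Real.sin_add, Real.sin_add] at e1
      linear_combination (V1 * V2 * V3 * V4) * e1
    · rw [Real.cos_add, Real.cos_add] at e2
      linear_combination -(V1 * V2 * V3 * V4) * e2
end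

section
/- Vertex representation of the convex hull of a multilinear monomial over a box: let k ≥ 1 and let a, b : {1,…,k} → ℝ with a_i ≤ b_i for all i. Let ω(x) := ∏_{i=1}^k x_i and let Γ_ω := {(x, w) ∈ ℝ^k × ℝ : a_i ≤ x_i ≤ b_i for all i, and w = ω(x)} be the graph of ω over the box C = ∏_{i=1}^k [a_i, b_i]. Then the convex hull of Γ_ω equals the convex hull of the finite set {(v, ω(v)) : v a vertex of C}, where the vertices of C are the points v with v_i ∈ {a_i, b_i} for every i. -/
open Finset

/-- Vertex representation of the convex hull of a multilinear monomial over a box: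
the convex hull of the graph of `ω x = ∏ i, x i` over the box `∏ i, [a i, b i]`
equals the convex hull of the set of pairs `(v, ω v)` where `v` ranges over the
vertices of the box. -/
theorem convexHull_monomial_graph_eq_convexHull_vertices
    (k : ℕ) (hk : 1 ≤ k) (a b : Fin k → ℝ) (hab : ∀ i, a i ≤ b i) :
    convexHull ℝ {p : (Fin k → ℝ) × ℝ |
        (∀ i, p.1 i ∈ Set.Icc (a i) (b i)) ∧ p.2 = ∏ i, p.1 i} =
      convexHull ℝ {p : (Fin k → ℝ) × ℝ |
        (∀ i, p.1 i = a i ∨ p.1 i = b i) ∧ p.2 = ∏ i, p.1 i} := by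
  classical
  set S : Set ((Fin k → ℝ) × ℝ) := {p : (Fin k → ℝ) × ℝ |
        (∀ i, p.1 i = a i ∨ p.1 i = b i) ∧ p.2 = ∏ i, p.1 i} with hS
  apply Set.Subset.antisymm
  · -- graph ⊆ convexHull S
    apply convexHull_min _ (convex_convexHull ℝ S)
    rintro ⟨x, wval⟩ ⟨hx, hwv⟩
    simp only [Set.mem_setOf_eq] at hx hwv
    -- parameters
    set t : Fin k → ℝ := fun i => if h : a i = b i then 0 else (x i - a i) / (b i - a i)
      with ht_def
    have ht0 : ∀ i, 0 ≤ t i := by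
      intro i
      rw [ht_def]
      by_cases h : a i = b i
      · simp [h]
      · simp only [h, dif_neg, not_false_iff]
        have hlt : 0 < b i - a i := sub_pos.mpr (lt_of_le_of_ne (hab i) h)
        exact div_nonneg (sub_nonneg.mpr (hx i).1) hlt.le
    have ht1 : ∀ i, t i ≤ 1 := by
      intro i
      rw [ht_def]
      by_cases h : a i = b i
      · simp [h]
      · simp only [h, dif_neg, not_false_iff]
        have hlt : 0 < b i - a i := sub_pos.mpr (lt_of_le_of_ne (hab i) h)
        rw [div_le_one hlt]
        linarith [(hx i).2]
    have htx : ∀ i, t i * b i + (1 - t i) * a i = x i := by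
      intro i
      rw [ht_def]
      by_cases h : a i = b i
      · simp [h]
        have h1 : x i ≤ b i := (hx i).2
        have h2 : a i ≤ x i := (hx i).1
        linarith [h ▸ h1, h ▸ h2]
      · simp only [h, dif_neg, not_false_iff]
        have hlt : 0 < b i - a i := sub_pos.mpr (lt_of_le_of_ne (hab i) h)
        field_simp
        ring
    -- weights and vertex points
    set f : Fin k → Bool → ℝ := fun i c => if c then t i else 1 - t i with hf_def
    set w : (Fin k → Bool) → ℝ := fun σ => ∏ i, f i (σ i) with hw_def
    set v : (Fin k → Bool) → (Fin k → ℝ) := fun σ j => if σ j then b j else a j with hv_def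
    set z : (Fin k → Bool) → ((Fin k → ℝ) × ℝ) := fun σ => (v σ, ∏ i, v σ i) with hz_def
    have hf_nonneg : ∀ i c, 0 ≤ f i c := by
      intro i c
      cases c <;> simp [hf_def] <;> [linarith [ht1 i]; exact ht0 i]
    have hw_nonneg : ∀ σ, 0 ≤ w σ := fun σ => Finset.prod_nonneg fun i _ => hf_nonneg i (σ i)
    have key : ∀ g : Fin k → Bool → ℝ,
        ∑ σ : Fin k → Bool, ∏ i, g i (σ i) = ∏ i, (g i true + g i false) := by
      intro g
      have h := Finset.prod_univ_sum (fun _ : Fin k => (Finset.univ : Finset Bool)) g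
      rw [Fintype.piFinset_univ] at h
      rw [← h]
      exact Finset.prod_congr rfl fun i _ => by simp [add_comm]
    have hsum : ∑ σ : Fin k → Bool, w σ = 1 := by
      simp only [hw_def]
      rw [key f]
      simp [hf_def]
    -- fst coordinates
    have hfst : ∀ j, ∑ σ : Fin k → Bool, w σ * v σ j = x j := by
      intro j
      have step : ∀ σ : Fin k → Bool, w σ * v σ j
          = ∏ i, ((fun i c => f i c * (if i = j then (if c then b i else a i) else 1)) i (σ i)) := by
        intro σ
        simp only []
        rw [Finset.prod_mul_distrib]
        congr 1
        rw [Finset.prod_ite_eq' Finset.univ j (fun i => if σ i then b i else a i)]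
        simp [hv_def]
      rw [Finset.sum_congr rfl fun σ _ => step σ,
        key (fun i c => f i c * (if i = j then (if c then b i else a i) else 1)),
        Finset.prod_eq_single j]
      · simp only [if_pos rfl, hf_def, if_pos, if_neg]
        simp
        linarith [htx j]
      · intro i _ hij
        simp [hij, hf_def]
      · simp
    -- snd coordinate
    have hsnd : ∑ σ : Fin k → Bool, w σ * (∏ i, v σ i) = ∏ i, x i := by
      have : ∀ σ : Fin k → Bool, w σ * (∏ i, v σ i)
          = ∏ i, (f i (σ i) * v σ i) := fun σ => (Finset.prod_mul_distrib).symm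
      rw [Finset.sum_congr rfl fun σ _ => this σ]
      have := key (fun i c => f i c * (if c then b i else a i))
      rw [this]
      exact Finset.prod_congr rfl fun i _ => by simp [hf_def]; linarith [htx i]
    -- assemble
    have hz_mem : ∀ σ : Fin k → Bool, z σ ∈ S := by
      intro σ
      refine ⟨fun i => ?_, rfl⟩
      by_cases h : σ i <;> simp [hz_def, hv_def, h]
    have hmem := Finset.centerMass_mem_convexHull (t := (Finset.univ : Finset (Fin k → Bool)))
      (fun σ _ => hw_nonneg σ) (by rw [hsum]; norm_num) (fun σ _ => hz_mem σ)
    rw [Finset.centerMass_eq_of_sum_1 _ _ hsum] at hmem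
    convert hmem using 1
    apply Prod.ext
    · rw [Prod.fst_sum]
      funext j
      rw [Finset.sum_apply]
      simp only [hz_def, Prod.smul_fst, Pi.smul_apply, smul_eq_mul]
      exact (hfst j).symm
    · rw [Prod.snd_sum]
      simp only [hz_def, Prod.smul_snd, smul_eq_mul]
      rw [hwv]
      exact (hsnd).symm
  · apply convexHull_mono
    rintro ⟨x, wval⟩ ⟨hx, hwv⟩
    refine ⟨fun i => ?_, hwv⟩
    rcases hx i with h | h <;> rw [h]
    · exact ⟨le_refl _, hab i⟩
    · exact ⟨hab i, le_refl _⟩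
end

section
/- McCormick envelope of a bilinear term: let a ≤ b and c ≤ d be real numbers. Then the convex hull of the set {(x, y, xy) : a ≤ x ≤ b, c ≤ y ≤ d} ⊆ ℝ³ equals the set of all (x, y, z) ∈ ℝ³ satisfying a ≤ x ≤ b, c ≤ y ≤ d, z ≥ c·x + a·y − a·c, z ≥ d·x + b·y − b·d, z ≤ d·x + a·y − a·d, and z ≤ c·x + b·y − b·c. -/
/-- McCormick envelope of a bilinear term: for `a ≤ b` and `c ≤ d`, the convex hull
of `{(x, y, xy) : a ≤ x ≤ b, c ≤ y ≤ d}` in `ℝ³` equals the set of `(x, y, z)` with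
`a ≤ x ≤ b`, `c ≤ y ≤ d`, `z ≥ cx + ay − ac`, `z ≥ dx + by − bd`,
`z ≤ dx + ay − ad`, `z ≤ cx + by − bc`. -/
theorem mcCormick_envelope_bilinear (a b c d : ℝ) (hab : a ≤ b) (hcd : c ≤ d) :
    convexHull ℝ {p : ℝ × ℝ × ℝ |
        a ≤ p.1 ∧ p.1 ≤ b ∧ c ≤ p.2.1 ∧ p.2.1 ≤ d ∧ p.2.2 = p.1 * p.2.1} =
      {p : ℝ × ℝ × ℝ | a ≤ p.1 ∧ p.1 ≤ b ∧ c ≤ p.2.1 ∧ p.2.1 ≤ d ∧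
        p.2.2 ≥ c * p.1 + a * p.2.1 - a * c ∧
        p.2.2 ≥ d * p.1 + b * p.2.1 - b * d ∧
        p.2.2 ≤ d * p.1 + a * p.2.1 - a * d ∧
        p.2.2 ≤ c * p.1 + b * p.2.1 - b * c} := by
  set S : Set (ℝ × ℝ × ℝ) := {p : ℝ × ℝ × ℝ |
        a ≤ p.1 ∧ p.1 ≤ b ∧ c ≤ p.2.1 ∧ p.2.1 ≤ d ∧ p.2.2 = p.1 * p.2.1}
  apply Set.Subset.antisymm
  · apply convexHull_min
    · rintro ⟨x, y, z⟩ ⟨h1, h2, h3, h4, h5⟩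
      refine ⟨h1, h2, h3, h4, ?_, ?_, ?_, ?_⟩ <;> simp only [ge_iff_le] <;>
        nlinarith [mul_nonneg (sub_nonneg.2 h1) (sub_nonneg.2 h3),
          mul_nonneg (sub_nonneg.2 h2) (sub_nonneg.2 h4),
          mul_nonneg (sub_nonneg.2 h1) (sub_nonneg.2 h4),
          mul_nonneg (sub_nonneg.2 h2) (sub_nonneg.2 h3)]
    · rintro ⟨x1, y1, z1⟩ hp ⟨x2, y2, z2⟩ hq u v hu hv huv
      obtain rfl : v = 1 - u := by linarith
      simp only [Set.mem_setOf_eq, Prod.smul_mk, Prod.mk_add_mk, smul_eq_mul] at hp hq ⊢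
      obtain ⟨p1, p2, p3, p4, p5, p6, p7, p8⟩ := hp
      obtain ⟨q1, q2, q3, q4, q5, q6, q7, q8⟩ := hq
      refine ⟨?_, ?_, ?_, ?_, ?_, ?_, ?_, ?_⟩ <;> simp only [ge_iff_le] at * <;>
        linarith [mul_le_mul_of_nonneg_left p1 hu, mul_le_mul_of_nonneg_left q1 hv,
          mul_le_mul_of_nonneg_left p2 hu, mul_le_mul_of_nonneg_left q2 hv,
          mul_le_mul_of_nonneg_left p3 hu, mul_le_mul_of_nonneg_left q3 hv,
          mul_le_mul_of_nonneg_left p4 hu, mul_le_mul_of_nonneg_left q4 hv,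
          mul_le_mul_of_nonneg_left p5 hu, mul_le_mul_of_nonneg_left q5 hv,
          mul_le_mul_of_nonneg_left p6 hu, mul_le_mul_of_nonneg_left q6 hv,
          mul_le_mul_of_nonneg_left p7 hu, mul_le_mul_of_nonneg_left q7 hv,
          mul_le_mul_of_nonneg_left p8 hu, mul_le_mul_of_nonneg_left q8 hv]
  · rintro ⟨x, y, z⟩ ⟨h1, h2, h3, h4, h5, h6, h7, h8⟩
    simp only [ge_iff_le, Set.mem_setOf_eq] at h5 h6 h7 h8
    by_cases hab' : a = b
    · have hx : x = a := le_antisymm (hab' ▸ h2) h1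
      have hz : z = x * y := by subst hx; subst hab'; nlinarith
      exact subset_convexHull ℝ S ⟨h1, h2, h3, h4, hz⟩
    by_cases hcd' : c = d
    · have hy : y = c := le_antisymm (hcd' ▸ h4) h3
      have hz : z = x * y := by subst hy; subst hcd'; nlinarith
      exact subset_convexHull ℝ S ⟨h1, h2, h3, h4, hz⟩
    have hba : (0:ℝ) < b - a := sub_pos.2 (lt_of_le_of_ne hab hab')
    have hdc : (0:ℝ) < d - c := sub_pos.2 (lt_of_le_of_ne hcd hcd')
    have hD : (0:ℝ) < (b - a) * (d - c) := mul_pos hba hdc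
    set w : Fin 4 → ℝ := ![(z - (d * x + b * y - b * d)) / ((b - a) * (d - c)),
      ((c * x + b * y - b * c) - z) / ((b - a) * (d - c)),
      ((d * x + a * y - a * d) - z) / ((b - a) * (d - c)),
      (z - (c * x + a * y - a * c)) / ((b - a) * (d - c))] with hw
    set vtx : Fin 4 → ℝ × ℝ × ℝ :=
      ![(a, c, a * c), (a, d, a * d), (b, c, b * c), (b, d, b * d)] with hvtx
    have hw0 : ∀ i, 0 ≤ w i := by
      intro i
      fin_cases i
      · show 0 ≤ (z - (d * x + b * y - b * d)) / ((b - a) * (d - c))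
        exact div_nonneg (by linarith) hD.le
      · show 0 ≤ ((c * x + b * y - b * c) - z) / ((b - a) * (d - c))
        exact div_nonneg (by linarith) hD.le
      · show 0 ≤ ((d * x + a * y - a * d) - z) / ((b - a) * (d - c))
        exact div_nonneg (by linarith) hD.le
      · show 0 ≤ (z - (c * x + a * y - a * c)) / ((b - a) * (d - c))
        exact div_nonneg (by linarith) hD.le
    have hvS : ∀ i, vtx i ∈ S := by
      intro i
      fin_cases i
      · exact ⟨le_rfl, hab, le_rfl, hcd, rfl⟩
      · exact ⟨le_rfl, hab, hcd, le_rfl, rfl⟩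
      · exact ⟨hab, le_rfl, le_rfl, hcd, rfl⟩
      · exact ⟨hab, le_rfl, hcd, le_rfl, rfl⟩
    have hsum : ∑ i : Fin 4, w i = 1 := by
      simp only [hw, Fin.sum_univ_four, Matrix.cons_val_zero, Matrix.cons_val_one,
        Matrix.head_cons, Matrix.cons_val_two, Matrix.tail_cons, Matrix.cons_val_three]
      field_simp
      ring
    have hcomb : ∑ i : Fin 4, w i • vtx i = ((x, y, z) : ℝ × ℝ × ℝ) := by
      simp only [hw, hvtx, Fin.sum_univ_four, Matrix.cons_val_zero, Matrix.cons_val_one,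
        Matrix.head_cons, Matrix.cons_val_two, Matrix.tail_cons, Matrix.cons_val_three,
        Prod.smul_mk, Prod.mk_add_mk, smul_eq_mul, Prod.mk.injEq]
      refine ⟨?_, ?_, ?_⟩ <;> · field_simp; ring
    have := (convex_convexHull ℝ S).sum_mem (t := Finset.univ)
      (fun i _ => hw0 i) hsum (fun i _ => subset_convexHull ℝ S (hvS i))
    rwa [hcomb] at this
end
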